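/- Let $K$ be a field, $n \geq 3$, and let $L(z)$ be the $n \times n$ periodic Jacobi matrix with diagonal entries $(I_1 + V_n, I_2 + V_1, \dots, I_n + V_{n-1})$, superdiagonal entries all $1$, subdiagonal entries $(I_1 V_1, \dots, I_{n-1} V_{n-1})$, entry $I_n V_n / z$ in position $(1, n)$, and entry $z$ in position $(n, 1)$, over the field $K(z)$ of rational functions (with $I_i, V_i \in K$). Then $(-1)^{n-1} z \det(L(z) - x E_n)$, as an element of $K(z)[x]$ viewed in $K[x][z, z^{-1}]$, equals $z^2 + h(x) z - f(x)$ for some $h \in K[x]$ of degree $n$ and $f = \prod_{i=1}^n I_i V_i \cdot (-1) \in K$ (i.e., $f = -I_1 V_1 \cdots I_n V_n$), assuming the leading coefficient condition holds (the coefficient of $x^n$ in $h$ is $(-1)^{2n-1} = -1$ up to sign, i.e., $h$ has degree exactly $n$). -/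

import Mathlib

open Polynomial

/-- The `n × n` periodic Jacobi matrix over `K(z)` (here `z = RatFunc.X`), with diagonal
`(I₁+Vₙ, I₂+V₁, …, Iₙ+Vₙ₋₁)`, superdiagonal all `1`, subdiagonal `(I₁V₁, …, Iₙ₋₁Vₙ₋₁)`,
entry `IₙVₙ/z` at position `(1, n)` and entry `z` at position `(n, 1)`. -/
noncomputable def pJac (K : Type*) [Field K] (n : ℕ) (I V : ℕ → K) :
    Matrix (Fin n) (Fin n) (RatFunc K) :=
  Matrix.of fun i j =>
    if (i : ℕ) = j then RatFunc.C (I ((i : ℕ) + 1) + V (if (i : ℕ) = 0 then n else (i : ℕ)))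
    else if (i : ℕ) + 1 = j then 1
    else if (j : ℕ) + 1 = i then RatFunc.C (I ((j : ℕ) + 1) * V ((j : ℕ) + 1))
    else if (i : ℕ) = 0 ∧ (j : ℕ) = n - 1 then RatFunc.C (I n * V n) / RatFunc.X
    else if (i : ℕ) = n - 1 ∧ (j : ℕ) = 0 then RatFunc.X
    else 0

/-!
`L(z) - x` is a tridiagonal matrix `T(x)` plus the corner entries `IₙVₙ/z` at `(1, n)` and `z`
at `(n, 1)`. Expanding the determinant multilinearly in rows `1` and `n` gives
`det T(x) + (IₙVₙ/z) C₁ + z C₂ + IₙVₙ C₁₂`. The cofactors `C₁ = ±∏_{i<n} IᵢVᵢ` and `C₂ = ±1` are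
determinants of triangular minors, and `C₁₂ = -det T'(x)` for the inner tridiagonal block `T'`.
Both `det T(x)` and `det T'(x)` are characteristic polynomials up to sign, so after multiplying
by `±z` the middle coefficient is `h = IₙVₙ χ_{T'} - χ_T`, of degree `n`.
-/

namespace Matrix

variable {R : Type*} [CommRing R]

theorem det_updateRow_single_one {m : ℕ} (A : Matrix (Fin (m + 1)) (Fin (m + 1)) R)
    (i j : Fin (m + 1)) :
    (A.updateRow i (Pi.single j 1)).det
      = (-1) ^ ((i : ℕ) + j) * (A.submatrix i.succAbove j.succAbove).det := by
  rw [← adjugate_apply, adjugate_fin_succ_eq_det_submatrix]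

variable {n : Type*} [Fintype n] [DecidableEq n]

theorem det_map_C_sub_X_smul_one (M : Matrix n n R) :
    (M.map (C : R →+* R[X]) - (X : R[X]) • 1).det = (-1) ^ Fintype.card n * M.charpoly := by
  have hneg : M.map (C : R →+* R[X]) - (X : R[X]) • 1 = -M.charmatrix := by
    ext i j
    rw [neg_apply, charmatrix_apply]
    by_cases h : i = j <;> simp [h]
  rw [hneg, det_neg, charpoly]

theorem det_updateRow_self_add_smul (A : Matrix n n R) (i : n) (u : n → R) (a : R) :
    (A.updateRow i (A i + a • u)).det = A.det + a * (A.updateRow i u).det := by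
  rw [det_updateRow_add, updateRow_eq_self, det_updateRow_smul]

theorem det_add_single_add_single (A : Matrix n n R) {i j : n} (hij : i ≠ j) (k l : n)
    (a b : R) :
    (A + single i k a + single j l b).det
      = A.det + a * (A.updateRow i (Pi.single k 1)).det + b * (A.updateRow j (Pi.single l 1)).det
        + a * b * ((A.updateRow i (Pi.single k 1)).updateRow j (Pi.single l 1)).det := by
  have hA : A + single i k a + single j l b
      = (A.updateRow i (A i + a • Pi.single k 1)).updateRow j
          ((A.updateRow i (A i + a • Pi.single k 1)) j + b • Pi.single l 1) := by
    ext r s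
    simp only [add_apply, updateRow_apply, single_apply, Pi.add_apply, Pi.smul_apply,
      Pi.single_apply, smul_eq_mul]
    split_ifs <;> subst_vars <;> simp_all
  rw [hA, det_updateRow_self_add_smul, det_updateRow_self_add_smul, updateRow_comm _ hij,
    ← updateRow_ne (M := A) (b := Pi.single l 1) hij, det_updateRow_self_add_smul,
    updateRow_comm _ hij.symm]
  ring

end Matrix

def tridiag (R : Type*) [CommRing R] (n : ℕ) (d c : ℕ → R) : Matrix (Fin n) (Fin n) R :=
  Matrix.of fun i j =>
    if (i : ℕ) = j then d i
    else if (i : ℕ) + 1 = j then 1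
    else if (j : ℕ) + 1 = i then c j
    else 0

namespace tridiag

variable {R : Type*} [CommRing R]

lemma map {S : Type*} [CommRing S] (f : R →+* S) (n : ℕ) (d c : ℕ → R) :
    (tridiag R n d c).map f = tridiag S n (f ∘ d) (f ∘ c) := by
  ext i j
  simp only [tridiag, Matrix.map_apply, Matrix.of_apply]
  split_ifs <;> simp

lemma map_map_C_sub_X_smul_one {S : Type*} [CommRing S] (f : R →+* S) (n : ℕ) (d c : ℕ → R) :
    ((tridiag R n d c).map f).map (C : S →+* S[X]) - (X : S[X]) • 1
      = tridiag S[X] n (fun i => C (f (d i)) - X) (fun i => C (f (c i))) := by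
  ext i j
  simp only [tridiag, Matrix.map_apply, Matrix.sub_apply, Matrix.smul_apply, Matrix.one_apply,
    Matrix.of_apply, Fin.ext_iff]
  split_ifs <;> simp

lemma det_C_sub_X {S : Type*} [CommRing S] (f : R →+* S) (n : ℕ) (d c : ℕ → R) :
    (tridiag S[X] n (fun i => C (f (d i)) - X) (fun i => C (f (c i)))).det
      = (-1) ^ n * (tridiag R n d c).charpoly.map f := by
  rw [← map_map_C_sub_X_smul_one, Matrix.det_map_C_sub_X_smul_one, Matrix.charpoly_map,
    Fintype.card_fin]

lemma det_submatrix_succ_castSucc (n : ℕ) (d c : ℕ → R) :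
    ((tridiag R (n + 1) d c).submatrix Fin.succ Fin.castSucc).det = ∏ i : Fin n, c i := by
  rw [Matrix.det_of_isUpperTriangular]
  · refine Finset.prod_congr rfl fun i _ => ?_
    simp [tridiag, show (i : ℕ) + 1 + 1 ≠ i by omega]
  · intro i j hij
    have : (j : ℕ) < i := hij
    simp only [Matrix.submatrix_apply, tridiag, Matrix.of_apply, Fin.val_succ, Fin.val_castSucc]
    rw [if_neg (by omega), if_neg (by omega), if_neg (by omega)]

lemma det_submatrix_castSucc_succ (n : ℕ) (d c : ℕ → R) :
    ((tridiag R (n + 1) d c).submatrix Fin.castSucc Fin.succ).det = 1 := by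
  rw [Matrix.det_of_isLowerTriangular]
  · refine Finset.prod_eq_one fun i _ => ?_
    simp [tridiag]
  · intro i j hij
    have : (i : ℕ) < j := hij
    simp only [Matrix.submatrix_apply, tridiag, Matrix.of_apply, Fin.val_succ, Fin.val_castSucc]
    rw [if_neg (by omega), if_neg (by omega), if_neg (by omega)]

lemma submatrix_inner (n : ℕ) (d c : ℕ → R) :
    (tridiag R (n + 2) d c).submatrix (Fin.castSucc ∘ Fin.succ) (Fin.succ ∘ Fin.castSucc)
      = tridiag R n (fun i => d (i + 1)) (fun i => c (i + 1)) := by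
  ext i j
  simp only [Matrix.submatrix_apply, Function.comp, tridiag, Matrix.of_apply, Fin.val_succ,
    Fin.val_castSucc]
  split_ifs <;> first | rfl | omega

lemma det_updateRow_zero_single_last (m : ℕ) (d c : ℕ → R) :
    ((tridiag R (m + 2) d c).updateRow 0 (Pi.single (Fin.last (m + 1)) 1)).det
      = (-1) ^ (m + 1) * ∏ i : Fin (m + 1), c i := by
  rw [Matrix.det_updateRow_single_one, Fin.succAbove_last, Fin.val_last, Fin.val_zero, zero_add]
  exact congrArg _ (det_submatrix_succ_castSucc _ d c)

lemma det_updateRow_last_single_zero (m : ℕ) (d c : ℕ → R) :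
    ((tridiag R (m + 2) d c).updateRow (Fin.last (m + 1)) (Pi.single 0 1)).det
      = (-1) ^ (m + 1) := by
  rw [Matrix.det_updateRow_single_one, Fin.succAbove_last, Fin.val_last, Fin.val_zero, add_zero]
  exact (congrArg _ (det_submatrix_castSucc_succ _ d c)).trans (mul_one _)

lemma det_updateRow_zero_updateRow_last (m : ℕ) (d c : ℕ → R) :
    (((tridiag R (m + 2) d c).updateRow 0 (Pi.single (Fin.last (m + 1)) 1)).updateRow
        (Fin.last (m + 1)) (Pi.single 0 1)).det
      = -(tridiag R m (fun i => d (i + 1)) (fun i => c (i + 1))).det := by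
  have hsub : ((tridiag R (m + 2) d c).updateRow 0 (Pi.single (Fin.last (m + 1)) 1)).submatrix
      Fin.castSucc (0 : Fin (m + 2)).succAbove
      = ((tridiag R (m + 2) d c).submatrix Fin.castSucc Fin.succ).updateRow
          0 (Pi.single (Fin.last m) 1) := by
    ext i j
    simp only [Matrix.submatrix_apply, Matrix.updateRow_apply, Pi.single_apply, Fin.ext_iff,
      Fin.val_castSucc, Fin.zero_succAbove, Fin.val_succ, Fin.val_last, Fin.val_zero]
    split_ifs <;> first | rfl | omega
  rw [Matrix.det_updateRow_single_one, Fin.succAbove_last, Fin.val_last, Fin.val_zero, add_zero,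
    hsub, Matrix.det_updateRow_single_one, Fin.succAbove_last, Fin.val_last, Fin.val_zero,
    zero_add, Matrix.submatrix_submatrix, ← submatrix_inner, ← mul_assoc, ← pow_add,
    Odd.neg_one_pow ⟨m, by ring⟩, neg_one_mul]
  rfl

end tridiag

lemma pJac_eq_tridiag_add_corners {K : Type*} [Field K] (m : ℕ) (I V : ℕ → K) :
    pJac K (m + 3) I V
      = (tridiag K (m + 3) (fun i => I (i + 1) + V (if i = 0 then m + 3 else i))
          (fun i => I (i + 1) * V (i + 1))).map RatFunc.C
        + Matrix.single 0 (Fin.last (m + 2)) (RatFunc.C (I (m + 3) * V (m + 3)) / RatFunc.X)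
        + Matrix.single (Fin.last (m + 2)) 0 RatFunc.X := by
  rw [tridiag.map]
  ext i j
  simp only [pJac, tridiag, Function.comp_apply, Matrix.add_apply, Matrix.of_apply,
    Matrix.single_apply, Fin.ext_iff, Fin.val_last, Fin.val_zero]
  split_ifs <;> first | (exfalso; omega) | simp

/-- The spectral curve of the discrete periodic Toda flow:
`(−1)^{n−1} z · det(L(z) − x Eₙ) = z² + h(x) z − f(x)` with `h ∈ K[x]` of degree exactly
`n` and `f = −I₁V₁ ⋯ IₙVₙ` (so `−f(x) = +∏ᵢ IᵢVᵢ`). -/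
theorem stmt_11 {K : Type*} [Field K] (n : ℕ) (hn : 3 ≤ n) (I V : ℕ → K) :
    ∃ h : K[X], h.natDegree = n ∧
      (-1 : Polynomial (RatFunc K)) ^ (n - 1) * C RatFunc.X *
        ((pJac K n I V).map (C : RatFunc K →+* Polynomial (RatFunc K)) -
          (X : Polynomial (RatFunc K)) • (1 : Matrix (Fin n) (Fin n) (Polynomial (RatFunc K)))).det
      = C (RatFunc.X ^ 2) + h.map (RatFunc.C : K →+* RatFunc K) * C RatFunc.X +
          C (RatFunc.C (∏ i ∈ Finset.Icc 1 n, I i * V i)) := by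
  obtain ⟨m, rfl⟩ : ∃ m, n = m + 3 := ⟨n - 3, by omega⟩
  have hL := pJac_eq_tridiag_add_corners m I V
  set d : ℕ → K := fun i => I (i + 1) + V (if i = 0 then m + 3 else i)
  set c : ℕ → K := fun i => I (i + 1) * V (i + 1)
  set α := I (m + 3) * V (m + 3)
  set P := (tridiag K (m + 3) d c).charpoly
  set Q := (tridiag K (m + 1) (fun i => d (i + 1)) (fun i => c (i + 1))).charpoly
  refine ⟨C α * Q - P, ?_, ?_⟩
  · have hQ : (C α * Q).natDegree < P.natDegree := by
      refine (natDegree_C_mul_le _ _).trans_lt ?_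
      simp only [P, Q, Matrix.charpoly_natDegree_eq_dim, Fintype.card_fin]
      omega
    rw [natDegree_sub_eq_right_of_natDegree_lt hQ, Matrix.charpoly_natDegree_eq_dim,
      Fintype.card_fin]
  have hprod : ∏ i ∈ Finset.Icc 1 (m + 3), I i * V i = (∏ i : Fin (m + 2), c i) * α := by
    rw [Finset.prod_Icc_succ_top (by omega), Fin.prod_univ_eq_prod_range c, Finset.range_eq_Ico,
      Finset.prod_Ico_add' (fun i => I i * V i)]
    rfl
  have hcorners : C (RatFunc.C α / RatFunc.X) * C RatFunc.X = C (RatFunc.C α) := by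
    rw [← map_mul, div_mul_cancel₀ _ RatFunc.X_ne_zero]
  have hsign : (-1 : (RatFunc K)[X]) ^ m * (-1) ^ m = 1 := by
    rw [← mul_pow, neg_one_mul, neg_neg, one_pow]
  rw [hL, Matrix.map_add _ (map_add C), Matrix.map_add _ (map_add C), Matrix.map_single,
    Matrix.map_single, add_sub_right_comm, add_sub_right_comm, tridiag.map_map_C_sub_X_smul_one,
    Matrix.det_add_single_add_single _ (Fin.last_pos.ne : (0 : Fin (m + 3)) ≠ Fin.last _),
    tridiag.det_C_sub_X, tridiag.det_updateRow_zero_single_last,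
    tridiag.det_updateRow_last_single_zero, tridiag.det_updateRow_zero_updateRow_last,
    tridiag.det_C_sub_X, hprod]
  simp only [show m + 3 - 1 = m + 2 from rfl, Polynomial.map_sub, Polynomial.map_mul,
    Polynomial.map_C, map_mul, map_pow, map_prod]
  linear_combination (-C RatFunc.X * P.map RatFunc.C
      + C (RatFunc.C α / RatFunc.X) * C RatFunc.X * ∏ i : Fin (m + 2), C (RatFunc.C (c i))
      + C RatFunc.X ^ 2
      + C (RatFunc.C α / RatFunc.X) * C RatFunc.X ^ 2 * Q.map RatFunc.C) * hsign
    + (∏ i : Fin (m + 2), C (RatFunc.C (c i)) + C RatFunc.X * Q.map RatFunc.C) * hcorners
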